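/- arXiv:math/0309389 — 10 statements merged into one kernel-verified Lean document; each statement's English description precedes it below -/
import Mathlib

section
/- Let r = (2l+1)/2 with l ≥ 1 an integer, and let v = ν₂(l) be the 2-adic valuation of l. Then f^(v+1)(r) is an integer, where f(x) = x·⌈x⌉. -/
lemma ceil_half_aux (l : ℕ) : ⌈((2 * (l : ℚ) + 1) / 2)⌉ = (l : ℤ) + 1 := by
  rw [Int.ceil_eq_iff]
  constructor
  · push_cast; linarith
  · push_cast; linarith

/-- Theorem 1 (existence part): for `r = (2l+1)/2` with `l ≥ 1` and `v = ν₂(l)`,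
the iterate `f^(v+1)(r)` is an integer, where `f x = x * ⌈x⌉`. -/
theorem approx_squaring_den_two_reaches_int (l : ℕ) (hl : 1 ≤ l) :
    ∃ n : ℤ,
      (fun x : ℚ => x * (⌈x⌉ : ℚ))^[padicValNat 2 l + 1] ((2 * l + 1) / 2) = n := by
  suffices h : ∀ v l, 1 ≤ l → padicValNat 2 l = v →
      ∃ n : ℤ, (fun x : ℚ => x * (⌈x⌉ : ℚ))^[v + 1] ((2 * l + 1) / 2) = n from
    h _ l hl rfl
  intro v
  induction v with
  | zero =>
    intro l hl hval
    have hodd : ¬ 2 ∣ l := by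
      rintro ⟨m, rfl⟩
      have hm : m ≠ 0 := by omega
      rw [padicValNat.mul (by norm_num) hm, padicValNat.self (by norm_num)] at hval
      omega
    obtain ⟨k, rfl⟩ : ∃ k, l = 2 * k + 1 := ⟨l / 2, by omega⟩
    refine ⟨(2 * (2 * k + 1) + 1) * (k + 1), ?_⟩
    simp only [zero_add, Function.iterate_one]
    rw [ceil_half_aux]
    push_cast
    ring
  | succ v ih =>
    intro l hl hval
    have h2 : 2 ∣ l := by
      by_contra h
      rw [padicValNat.eq_zero_of_not_dvd h] at hval
      omega
    obtain ⟨m, rfl⟩ := h2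
    have hm : 1 ≤ m := by omega
    have hval' : padicValNat 2 (m * (4 * m + 3)) = v := by
      rw [padicValNat.mul (by omega) (by omega),
        padicValNat.eq_zero_of_not_dvd (by omega : ¬ 2 ∣ (4 * m + 3))]
      rw [padicValNat.mul (by norm_num) (by omega), padicValNat.self (by norm_num)] at hval
      omega
    obtain ⟨n, hn⟩ := ih (m * (4 * m + 3)) (by nlinarith) hval'
    refine ⟨n, ?_⟩
    rw [Function.iterate_succ_apply]
    have key : ((2 * ((2 * m : ℕ) : ℚ) + 1) / 2) * (⌈((2 * ((2 * m : ℕ) : ℚ) + 1) / 2)⌉ : ℚ)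
        = (2 * ((m * (4 * m + 3) : ℕ) : ℚ) + 1) / 2 := by
      rw [ceil_half_aux]
      push_cast
      ring
    rw [key, hn]
end

section
/- Let r = (2l+1)/2 with l ≥ 1 an integer and v = ν₂(l). Then for all 0 ≤ m ≤ v, the iterate f^(m)(r) is not an integer, where f(x) = x·⌈x⌉. In other words, f^(m)(r) first becomes an integer exactly at m = v+1. -/
/-!
Write `f x = x * ⌈x⌉`. For a half-odd number `(2k+1)/2` with `k = 2t` even, `⌈(4t+1)/2⌉ = 2t+1`, so
`f ((4t+1)/2) = (4t+1)(2t+1)/2 = (2t(4t+3)+1)/2` is again half-odd, and `ν₂ (t(4t+3)) = ν₂ t = ν₂ k - 1`.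
Hence `f` may be applied `ν₂ l` times to `(2l+1)/2` without ever leaving the half-odd numbers,
none of which is an integer.
-/

theorem padicValNat_two_mul_four_mul_add_three (t : ℕ) :
    padicValNat 2 (t * (4 * t + 3)) = padicValNat 2 t := by
  rcases Nat.eq_zero_or_pos t with rfl | ht
  · simp
  rw [padicValNat.mul ht.ne' (by omega),
    padicValNat.eq_zero_of_not_dvd (n := 4 * t + 3) (by omega), add_zero]

theorem two_mul_add_one_div_two_ne_intCast {K : Type*} [Field K] [CharZero K] (k : ℕ) (n : ℤ) :
    (2 * (k : K) + 1) / 2 ≠ n := by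
  intro h
  rw [div_eq_iff two_ne_zero] at h
  have : 2 * (k : ℤ) + 1 = n * 2 := by exact_mod_cast h
  omega

section HalfOdd

variable {K : Type*} [Field K] [LinearOrder K] [IsStrictOrderedRing K] [FloorRing K]

def ceilMul (x : K) : K := x * ⌈x⌉

theorem ceil_two_mul_add_one_div_two (k : ℕ) : ⌈(2 * (k : K) + 1) / 2⌉ = k + 1 := by
  rw [Int.ceil_eq_iff]
  push_cast
  constructor <;> linarith

theorem ceilMul_two_mul_two_mul_add_one_div_two (t : ℕ) :
    ceilMul ((2 * ((2 * t : ℕ) : K) + 1) / 2) = (2 * ((t * (4 * t + 3) : ℕ) : K) + 1) / 2 := by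
  rw [ceilMul, ceil_two_mul_add_one_div_two]
  push_cast
  ring

theorem exists_iterate_ceilMul_eq_two_mul_add_one_div_two (m k : ℕ)
    (hm : m ≤ padicValNat 2 k) :
    ∃ k' : ℕ, ceilMul^[m] ((2 * (k : K) + 1) / 2) = (2 * (k' : K) + 1) / 2 := by
  induction m generalizing k with
  | zero => exact ⟨k, rfl⟩
  | succ m ih =>
    have hk : k ≠ 0 := by rintro rfl; simp at hm
    obtain ⟨t, rfl⟩ : 2 ∣ k := dvd_of_one_le_padicValNat (by omega)
    have hν : padicValNat 2 (2 * t) = padicValNat 2 t + 1 := by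
      rw [padicValNat.mul two_ne_zero (by omega), padicValNat_self, add_comm]
    rw [Function.iterate_succ_apply, ceilMul_two_mul_two_mul_add_one_div_two]
    exact ih _ (by rw [padicValNat_two_mul_four_mul_add_three]; omega)

end HalfOdd

theorem approx_squaring_den_two_not_int_before_general (l : ℕ) :
    ∀ m : ℕ, m ≤ padicValNat 2 l →
      ¬ ∃ n : ℤ,
        (fun x : ℚ => x * (⌈x⌉ : ℚ))^[m] ((2 * l + 1) / 2) = n := by
  rintro m hm ⟨n, hn⟩
  obtain ⟨k, hk⟩ := exists_iterate_ceilMul_eq_two_mul_add_one_div_two (K := ℚ) m l hm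
  exact two_mul_add_one_div_two_ne_intCast k n (hk ▸ hn)

/-- Theorem 1 (minimality part): for `r = (2l+1)/2` with `l ≥ 1` and `v = ν₂(l)`,
the iterates `f^(m)(r)` for `0 ≤ m ≤ v` are not integers, where `f x = x * ⌈x⌉`. -/
theorem approx_squaring_den_two_not_int_before (l : ℕ) (hl : 1 ≤ l) :
    ∀ m : ℕ, m ≤ padicValNat 2 l →
      ¬ ∃ n : ℤ,
        (fun x : ℚ => x * (⌈x⌉ : ℚ))^[m] ((2 * l + 1) / 2) = n :=
  approx_squaring_den_two_not_int_before_general l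
end

section
/- For every rational r with denominator 2 and r > 1, there exists m ≥ 0 such that f^(j)(r) is an integer for all j ≥ m, where f(x) = x·⌈x⌉. -/
/-!
Write `r = a + 1/2` with `a ∈ ℤ`. Since `⌈a + 1/2⌉ = a + 1`, one step of `f` gives
`(a + 1/2)(a + 1)`. For odd `a = 2c + 1` this is the integer `(4c + 3)(c + 1)`; for even
`a = 2c` it is `c(4c + 3) + 1/2`, again of the form `a' + 1/2` with `a' = c(4c + 3)` having
exactly one factor of `2` fewer than `a`. Hence if `a ≠ 0` (i.e. `r ≠ 1/2`), after as many
steps as the `2`-adic valuation of `a` the odd case is reached, and integers stay integers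
since `f n = n²`.
-/

section ApproxSquare

variable {K : Type*} [Field K] [LinearOrder K] [IsStrictOrderedRing K] [FloorRing K]

def approxSquare (x : K) : K := x * ⌈x⌉

lemma approxSquare_intCast (n : ℤ) : approxSquare (n : K) = ((n * n : ℤ) : K) := by
  simp [approxSquare]

lemma mapsTo_approxSquare_range_intCast :
    Set.MapsTo (approxSquare (K := K)) (Set.range Int.cast) (Set.range Int.cast) := by
  rintro _ ⟨n, rfl⟩
  exact ⟨n * n, (approxSquare_intCast n).symm⟩

lemma approxSquare_intCast_add_half (a : ℤ) :
    approxSquare ((a : K) + 1 / 2) = ((a : K) + 1 / 2) * (a + 1) := by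
  have hceil : ⌈(1 / 2 : K)⌉ = 1 := by
    rw [Int.ceil_eq_iff]
    norm_num
  rw [approxSquare, Int.ceil_intCast_add, hceil]
  push_cast
  ring

lemma approxSquare_odd_add_half (c : ℤ) :
    approxSquare (((2 * c + 1 : ℤ) : K) + 1 / 2) = (((4 * c + 3) * (c + 1) : ℤ) : K) := by
  rw [approxSquare_intCast_add_half]
  push_cast
  ring

lemma approxSquare_even_add_half (c : ℤ) :
    approxSquare (((2 * c : ℤ) : K) + 1 / 2) = ((c * (4 * c + 3) : ℤ) : K) + 1 / 2 := by
  rw [approxSquare_intCast_add_half]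
  push_cast
  ring

lemma exists_iterate_approxSquare_two_pow_mul_add_half_mem_range (k : ℕ) {b : ℤ}
    (hb : Odd b) : ∃ m : ℕ,
      approxSquare^[m] (((2 ^ k * b : ℤ) : K) + 1 / 2) ∈ Set.range Int.cast := by
  induction k generalizing b with
  | zero =>
    obtain ⟨c, rfl⟩ := hb
    exact ⟨1, _, by rw [Function.iterate_one, pow_zero, one_mul, approxSquare_odd_add_half]⟩
  | succ k ih =>
    have hb' : Odd (b * (4 * (2 ^ k * b) + 3)) :=
      hb.mul ⟨2 * (2 ^ k * b) + 1, by ring⟩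
    obtain ⟨m, hm⟩ := ih hb'
    refine ⟨m + 1, ?_⟩
    rw [Function.iterate_succ_apply, pow_succ', mul_assoc, approxSquare_even_add_half]
    convert hm using 4
    ring

lemma exists_iterate_approxSquare_intCast_add_half_mem_range {a : ℤ} (ha : a ≠ 0) :
    ∃ m : ℕ, approxSquare^[m] ((a : K) + 1 / 2) ∈ Set.range Int.cast := by
  obtain ⟨b, hab, hb⟩ := (Int.finiteMultiplicity_iff (a := 2).mpr
    ⟨by decide, ha⟩).exists_eq_pow_mul_and_not_dvd
  rw [hab]
  exact exists_iterate_approxSquare_two_pow_mul_add_half_mem_range _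
    (Int.not_even_iff_odd.mp (mt Even.two_dvd hb))

end ApproxSquare

lemma Rat.exists_eq_intCast_add_half {r : ℚ} (hden : ¬ ∃ n : ℤ, r = n)
    (h2 : ∃ n : ℤ, 2 * r = n) : ∃ a : ℤ, r = a + 1 / 2 := by
  obtain ⟨t, ht⟩ := h2
  rcases Int.even_or_odd' t with ⟨a, rfl | rfl⟩
  · exact absurd ⟨a, by push_cast at ht; linarith⟩ hden
  · exact ⟨a, by push_cast at ht; linarith⟩

/-- Conjecture 1 for denominator 2: if `r > 1`, `r` is not an integer but `2r` is an
integer, then the iterates of `f x = x * ⌈x⌉` starting from `r` are eventually integers. -/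
theorem approx_squaring_den_two_eventually_int (r : ℚ) (hr : 1 < r)
    (hden : ¬ ∃ n : ℤ, r = n) (h2 : ∃ n : ℤ, 2 * r = n) :
    ∃ m : ℕ, ∀ j : ℕ, m ≤ j →
      ∃ n : ℤ, (fun x : ℚ => x * (⌈x⌉ : ℚ))^[j] r = n := by
  obtain ⟨a, rfl⟩ := Rat.exists_eq_intCast_add_half hden h2
  have ha : a ≠ 0 := by
    rintro rfl
    norm_num at hr
  obtain ⟨m, hm⟩ := exists_iterate_approxSquare_intCast_add_half_mem_range (K := ℚ) ha
  refine ⟨m, fun j hj => ?_⟩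
  obtain ⟨n, hn⟩ := mapsTo_approxSquare_range_intCast.iterate (j - m) hm
  refine ⟨n, ?_⟩
  rw [hn, ← Function.iterate_add_apply, Nat.sub_add_cancel hj]
  rfl
end

section
/- Let r = (2l+1)/2, l ≥ 1, with ν₂(l) = v. Then the first integer value taken by iterates of f starting at r equals (1/2)·θ^(v+1)(2l+1), where θ(y) = y(y+1)/2 and f(x) = x·⌈x⌉. -/
lemma ceil_half (l : ℕ) : ⌈((2 * (l : ℚ) + 1)) / 2⌉ = (l : ℤ) + 1 := by
  rw [Int.ceil_eq_iff]
  constructor <;> push_cast <;> linarith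

lemma half_not_int (l : ℕ) : ¬ ∃ n : ℤ, ((2 * (l : ℚ) + 1)) / 2 = n := by
  rintro ⟨n, hn⟩
  have h : (2 * (l : ℚ) + 1) = 2 * n := by
    field_simp at hn; linarith
  have h2 : (2 * (l : ℤ) + 1) = 2 * n := by exact_mod_cast h
  omega

lemma f_step (l : ℕ) :
    (fun x : ℚ => x * (⌈x⌉ : ℚ)) ((2 * l + 1) / 2) = (2 * l + 1) * (l + 1) / 2 := by
  show ((2 * (l:ℚ) + 1) / 2) * (⌈(2 * (l:ℚ) + 1) / 2⌉ : ℚ) = _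
  rw [ceil_half]
  push_cast
  ring

lemma aux : ∀ v l : ℕ, 1 ≤ l → padicValNat 2 l = v →
    (fun x : ℚ => x * (⌈x⌉ : ℚ))^[v + 1] ((2 * l + 1) / 2)
      = (1 / 2) * (fun y : ℚ => y * (y + 1) / 2)^[v + 1] (2 * l + 1)
    ∧ (∃ n : ℤ,
        (1 / 2) * (fun y : ℚ => y * (y + 1) / 2)^[v + 1] (2 * l + 1) = n)
    ∧ ∀ m : ℕ, m ≤ v →
        ¬ ∃ n : ℤ, (fun x : ℚ => x * (⌈x⌉ : ℚ))^[m] ((2 * l + 1) / 2) = n := by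
  intro v
  induction v with
  | zero =>
    intro l hl hv
    have hodd : ¬ (2 ∣ l) := by
      intro h
      have := one_le_padicValNat_of_dvd (by omega) h
      omega
    obtain ⟨j, hj⟩ : ∃ j, l = 2 * j + 1 := ⟨l / 2, by omega⟩
    refine ⟨?_, ⟨(2 * l + 1) * (j + 1), ?_⟩, ?_⟩
    · simp only [zero_add, Function.iterate_one]
      have := f_step l
      simp only at this
      rw [this]
      ring
    · simp only [zero_add, Function.iterate_one]
      subst hj
      push_cast
      ring
    · intro m hm
      interval_cases m
      simpa using half_not_int l
  | succ v ih =>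
    intro l hl hv
    have h2 : 2 ∣ l := by
      have hp := pow_padicValNat_dvd (p := 2) (n := l)
      rw [hv] at hp
      exact dvd_trans (dvd_pow_self 2 (Nat.succ_ne_zero v)) hp
    obtain ⟨k, hk⟩ := h2
    have hk1 : 1 ≤ k := by omega
    set l' := k * (4 * k + 3) with hl'
    have hl'1 : 1 ≤ l' := by
      rw [hl']; exact Nat.mul_pos (by omega) (by omega)
    have hvk : padicValNat 2 k = v := by
      have : padicValNat 2 l = padicValNat 2 2 + padicValNat 2 k := by
        rw [hk, padicValNat.mul (by norm_num) (by omega)]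
      rw [padicValNat.self (by norm_num)] at this
      omega
    have hvl' : padicValNat 2 l' = v := by
      rw [hl', padicValNat.mul (by omega) (by omega), hvk,
        padicValNat.eq_zero_of_not_dvd (by omega)]
      omega
    obtain ⟨A, B, C⟩ := ih l' hl'1 hvl'
    have hstep : (2 * (l:ℚ) + 1) / 2 * (⌈(2 * (l:ℚ) + 1) / 2⌉ : ℚ)
        = (2 * (l' : ℚ) + 1) / 2 := by
      have := f_step l
      simp only at this
      rw [this, hl', hk]
      push_cast
      ring
    have hθ : (2 * (l:ℚ) + 1) * (2 * (l:ℚ) + 1 + 1) / 2 = 2 * (l' : ℚ) + 1 := by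
      rw [hl', hk]
      push_cast
      ring
    refine ⟨?_, ?_, ?_⟩
    · simp only [Function.iterate_succ_apply] at A ⊢
      rw [hstep, hθ]
      exact A
    · simp only [Function.iterate_succ_apply] at B ⊢
      rw [hθ]
      exact B
    · intro m hm
      match m with
      | 0 => simpa using half_not_int l
      | m' + 1 =>
        simp only [Function.iterate_succ_apply]
        rw [hstep]
        exact C m' (by omega)

/-- Corollary: for `r = (2l+1)/2`, `l ≥ 1`, `ν₂(l) = v`, the first integer value taken
by the iterates of `f x = x * ⌈x⌉` starting at `r` is `(1/2) θ^(v+1)(2l+1)` where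
`θ y = y (y+1)/2`: the iterate `f^(v+1)(r)` equals this value and is an integer, while
all earlier iterates are not integers. -/
theorem approx_squaring_den_two_first_integer_value (l : ℕ) (hl : 1 ≤ l) :
    (fun x : ℚ => x * (⌈x⌉ : ℚ))^[padicValNat 2 l + 1] ((2 * l + 1) / 2)
      = (1 / 2) * (fun y : ℚ => y * (y + 1) / 2)^[padicValNat 2 l + 1] (2 * l + 1)
    ∧ (∃ n : ℤ,
        (1 / 2) * (fun y : ℚ => y * (y + 1) / 2)^[padicValNat 2 l + 1] (2 * l + 1) = n)
    ∧ ∀ m : ℕ, m ≤ padicValNat 2 l →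
        ¬ ∃ n : ℤ, (fun x : ℚ => x * (⌈x⌉ : ℚ))^[m] ((2 * l + 1) / 2) = n :=
  aux (padicValNat 2 l) l hl rfl
end

section
/- If y ≡ 5 (mod 8), then starting from r = y/2, the second iterate f^(2)(r) is the integer y(y+1)(y²+y+2)/16, where f(x) = x·⌈x⌉. -/
/-- If `y ≡ 5 (mod 8)` then the second iterate of `f x = x * ⌈x⌉` starting at `y/2` is
the integer `y (y+1) (y² + y + 2) / 16`. -/
theorem approx_squaring_five_mod_eight (y : ℕ) (hy : 0 < y) (h : y % 8 = 5) :
    ∃ n : ℤ, (fun x : ℚ => x * (⌈x⌉ : ℚ))^[2] ((y : ℚ) / 2) = n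
      ∧ (n : ℚ) = y * (y + 1) * (y ^ 2 + y + 2) / 16 := by
  obtain ⟨k, rfl⟩ : ∃ k, y = 8 * k + 5 := ⟨y / 8, by omega⟩
  have h1 : ⌈((8 * k + 5 : ℕ) : ℚ) / 2⌉ = 4 * (k : ℤ) + 3 := by
    rw [Int.ceil_eq_iff]
    push_cast
    constructor <;> linarith
  have h2 : (((8 * k + 5 : ℕ) : ℚ) / 2) * ((4 * (k : ℤ) + 3 : ℤ) : ℚ)
      = ((16 * (k : ℚ) ^ 2 + 22 * k + 7) + 1 / 2) := by
    push_cast; ring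
  have h3 : ⌈((16 * (k : ℚ) ^ 2 + 22 * k + 7) + 1 / 2)⌉
      = 16 * (k : ℤ) ^ 2 + 22 * k + 8 := by
    rw [Int.ceil_eq_iff]
    push_cast
    constructor <;> nlinarith [sq_nonneg (k : ℚ)]
  refine ⟨(8 * k + 5) * (4 * k + 3) * (8 * k ^ 2 + 11 * k + 4), ?_, ?_⟩
  · simp only [Function.iterate_succ, Function.iterate_zero, Function.comp_apply, id_eq]
    rw [h1, h2, h3]
    push_cast
    ring
  · push_cast
    ring
end

section
/- For any integer d ≥ 2, min_{d'|d, d'>1} log(d'/φ(d'))/log d' = min_{p^j ∥ d} log(1 + 1/(p-1))/(j log p), where the second minimum is over primes p with p^j exactly dividing d. -/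
open Real

/-! The function `α(n) = log (n / φ n) / log n` is a mediant: writing `n = ∏ p ^ aₚ`,
its numerator is `∑ log (p / (p - 1))` and its denominator `∑ aₚ log p`, so `α(n)` is at least
the smallest of the ratios `log (p / (p - 1)) / (aₚ log p)`. For a divisor `n` of `d` each such
ratio only decreases when `aₚ` is raised to the exact exponent `jₚ` of `p` in `d`, and the value
`log (p / (p - 1)) / (jₚ log p)` is attained by the divisor `p ^ jₚ` itself. -/

theorem Finset.exists_div_le_sum_div_sum {ι K : Type*} [Field K] [LinearOrder K]
    [IsStrictOrderedRing K] {s : Finset ι} (hs : s.Nonempty) (a b : ι → K)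
    (hb : ∀ i ∈ s, 0 < b i) :
    ∃ i ∈ s, a i / b i ≤ (∑ i ∈ s, a i) / ∑ i ∈ s, b i := by
  set r := (∑ i ∈ s, a i) / ∑ i ∈ s, b i
  have hsum : ∑ i ∈ s, a i ≤ ∑ i ∈ s, r * b i := by
    rw [← Finset.mul_sum, div_mul_cancel₀ _ (Finset.sum_pos hb hs).ne']
  obtain ⟨i, hi, hle⟩ := Finset.exists_le_of_sum_le hs hsum
  exact ⟨i, hi, (div_le_iff₀ (hb i hi)).2 hle⟩

namespace Real

theorem log_natCast_eq_sum_primeFactors (n : ℕ) :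
    log n = ∑ p ∈ n.primeFactors, n.factorization p * log p := by
  rw [log_nat_eq_sum_factorization, Finsupp.sum, Nat.support_factorization]

theorem log_div_totient_eq_sum_primeFactors (n : ℕ) :
    log (n / n.totient) = ∑ p ∈ n.primeFactors, log (1 + 1 / ((p : ℝ) - 1)) := by
  rcases eq_or_ne n 0 with rfl | hn
  · simp
  have one_lt : ∀ p ∈ n.primeFactors, (1 : ℝ) < p := fun p hp => by
    exact_mod_cast (Nat.prime_of_mem_primeFactors hp).one_lt
  have hφ : (n.totient : ℝ) = n * ∏ p ∈ n.primeFactors, (1 - (p : ℝ)⁻¹) := by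
    have := congrArg (Rat.cast : ℚ → ℝ) (Nat.totient_eq_mul_prod_factors n)
    push_cast at this
    exact this
  have hfactor : ∀ p ∈ n.primeFactors, 1 - (p : ℝ)⁻¹ ≠ 0 := fun p hp =>
    (sub_pos.2 (inv_lt_one_of_one_lt₀ (one_lt p hp))).ne'
  rw [hφ, div_mul_cancel_left₀ (by exact_mod_cast hn), log_inv, log_prod hfactor,
    ← Finset.sum_neg_distrib]
  refine Finset.sum_congr rfl fun p hp => ?_
  have : (p : ℝ) - 1 ≠ 0 := (sub_pos.2 (one_lt p hp)).ne'
  have : (p : ℝ) ≠ 0 := (zero_lt_one.trans (one_lt p hp)).ne'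
  rw [← log_inv]
  congr 1
  field_simp
  ring

theorem log_one_add_one_div_pred_nonneg {p : ℕ} (hp : p.Prime) :
    0 ≤ log (1 + 1 / ((p : ℝ) - 1)) := by
  have : (1 : ℝ) < p := by exact_mod_cast hp.one_lt
  exact log_nonneg (le_add_of_nonneg_right (one_div_nonneg.2 (by linarith)))

end Real

noncomputable def alpha (n : ℕ) : ℝ :=
  Real.log (n / n.totient) / Real.log n

theorem alpha_eq_sum_div_sum (n : ℕ) :
    alpha n = (∑ p ∈ n.primeFactors, Real.log (1 + 1 / ((p : ℝ) - 1))) /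
      ∑ p ∈ n.primeFactors, n.factorization p * Real.log p := by
  rw [alpha, Real.log_div_totient_eq_sum_primeFactors, Real.log_natCast_eq_sum_primeFactors]

theorem alpha_prime_pow {p j : ℕ} (hp : p.Prime) (hj : j ≠ 0) :
    alpha (p ^ j) = Real.log (1 + 1 / ((p : ℝ) - 1)) / (j * Real.log p) := by
  rw [alpha_eq_sum_div_sum, Nat.primeFactors_prime_pow hj hp, Finset.sum_singleton,
    Finset.sum_singleton, Nat.factorization_pow_self hp]

theorem exists_prime_dvd_div_factorization_le_alpha {n d : ℕ} (hd : d ≠ 0) (hnd : n ∣ d)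
    (hn : 1 < n) :
    ∃ p, p.Prime ∧ p ∣ d ∧
      Real.log (1 + 1 / ((p : ℝ) - 1)) / (d.factorization p * Real.log p) ≤ alpha n := by
  have hn0 : n ≠ 0 := by omega
  have hpos : ∀ p ∈ n.primeFactors, 0 < (n.factorization p : ℝ) * Real.log p := fun p hp => by
    have hp' := Nat.prime_of_mem_primeFactors hp
    have : 0 < n.factorization p := hp'.factorization_pos_of_dvd hn0 (Nat.dvd_of_mem_primeFactors hp)
    have : (1 : ℝ) < p := by exact_mod_cast hp'.one_lt
    have := Real.log_pos this
    positivity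
  obtain ⟨p, hp, hle⟩ :=
    Finset.exists_div_le_sum_div_sum (Nat.nonempty_primeFactors.2 hn) _ _ hpos
  have hpp := Nat.prime_of_mem_primeFactors hp
  have hexp : (n.factorization p : ℝ) ≤ d.factorization p := by
    exact_mod_cast (Nat.factorization_le_iff_dvd hn0 hd).2 hnd p
  refine ⟨p, hpp, (Nat.dvd_of_mem_primeFactors hp).trans hnd, ?_⟩
  rw [alpha_eq_sum_div_sum]
  refine le_trans ?_ hle
  exact div_le_div_of_nonneg_left (Real.log_one_add_one_div_pred_nonneg hpp) (hpos p hp)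
    (mul_le_mul_of_nonneg_right hexp (Real.log_nonneg (by exact_mod_cast hpp.one_lt.le)))

/-- For `d ≥ 2`, the minimum of `log(d'/φ(d'))/log d'` over divisors `d' > 1` of `d`
equals the minimum of `log(1 + 1/(p-1))/(j log p)` over prime powers `p^j` exactly
dividing `d` with `j ≥ 1`. -/
theorem alpha_min_over_prime_powers (d : ℕ) (hd : 2 ≤ d) :
    sInf ((fun d' : ℕ => Real.log ((d' : ℝ) / (Nat.totient d' : ℝ)) / Real.log d') ''
      {d' : ℕ | d' ∣ d ∧ 1 < d'})
    = sInf {x : ℝ | ∃ p j : ℕ, p.Prime ∧ 1 ≤ j ∧ p ^ j ∣ d ∧ ¬ p ^ (j + 1) ∣ d ∧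
        x = Real.log (1 + 1 / ((p : ℝ) - 1)) / (j * Real.log p)} := by
  have hd0 : d ≠ 0 := by omega
  refine csInf_eq_csInf_of_forall_exists_le ?_ ?_
  · rintro _ ⟨n, ⟨hnd, hn⟩, rfl⟩
    obtain ⟨p, hp, hpd, hle⟩ := exists_prime_dvd_div_factorization_le_alpha hd0 hnd hn
    exact ⟨_, ⟨p, d.factorization p, hp, hp.factorization_pos_of_dvd hd0 hpd,
      d.ordProj_dvd p, Nat.pow_succ_factorization_not_dvd hd0 hp, rfl⟩, hle⟩
  · rintro _ ⟨p, j, hp, hj, hdvd, -, rfl⟩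
    exact ⟨_, ⟨p ^ j, ⟨hdvd, Nat.one_lt_pow (by omega) hp.one_lt⟩, rfl⟩,
      (alpha_prime_pow hp (by omega)).le⟩
end

section
/- Let d ≥ 2 and h : ℤ → ℤ satisfy h(n) = (l·n + l_b)/d whenever n ≡ b (mod d), where gcd(l,d) = 1 and l_b ≡ -l·b (mod d) for 0 ≤ b ≤ d-1. Then for each k ≥ 1, the set of integers n such that h^(j)(n) ≢ 0 (mod d) for all 1 ≤ j ≤ k is a union of exactly d·(d-1)^k residue classes modulo d^{k+1}. -/
/-!
On a residue class `n ≡ b (mod d)` the map `h` is affine with slope `l / d`, so for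
`n ≡ n' (mod d)` we have `d (h n - h n') = l (n - n')`. As `l` is a unit modulo `d`, this gives
`n ≡ n' (mod d^(m+1))` iff `n ≡ n' (mod d)` and `h n ≡ h n' (mod d^m)`; hence
`n ↦ (n mod d, h n mod d^m)` is a bijection `ℤ/d^(m+1) → ℤ/d × ℤ/d^m`. Under this
bijection the integers `n` with `h^[j] n ≢ 0 (mod d)` for `j ≤ m` correspond to
`(ℤ/d ∖ {0}) × A_m`, where `A_m` describes the same condition for `j < m`; so by induction they
form `(d-1)^m` classes modulo `d^m`.
-/

theorem ZMod.exists_equiv_of_fibers_eq {c : ℕ} [NeZero c] {X : Type*} [Fintype X]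
    (hX : Fintype.card X = c) (φ : ℤ → X)
    (hφ : ∀ n n', φ n = φ n' ↔ (n : ZMod c) = n') :
    ∃ e : ZMod c ≃ X, ∀ n : ℤ, e n = φ n := by
  have hinj : Function.Injective fun x : ZMod c => φ x.cast := fun x y hxy => by
    simpa only [ZMod.intCast_zmod_cast] using (hφ _ _).mp hxy
  have hbij : Function.Bijective fun x : ZMod c => φ x.cast :=
    (Fintype.bijective_iff_injective_and_card _).mpr ⟨hinj, by rw [ZMod.card, hX]⟩
  exact ⟨Equiv.ofBijective _ hbij, fun n => (hφ _ _).mpr (ZMod.intCast_zmod_cast _)⟩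

namespace PeriodicallyLinear

variable {d : ℕ} {l : ℤ} {L h : ℤ → ℤ}

theorem mul_sub_eq_of_modEq (hh : ∀ n : ℤ, (d : ℤ) * h n = l * n + L (n % d)) {n n' : ℤ}
    (hnn' : n ≡ n' [ZMOD d]) : (d : ℤ) * (h n' - h n) = l * (n' - n) := by
  rw [mul_sub, hh, hh, hnn'.eq]
  ring

theorem modEq_pow_succ_iff [NeZero d] (hl : IsCoprime l (d : ℤ))
    (hh : ∀ n : ℤ, (d : ℤ) * h n = l * n + L (n % d)) (m : ℕ) (n n' : ℤ) :
    n ≡ n' [ZMOD d ^ (m + 1)] ↔ n ≡ n' [ZMOD d] ∧ h n ≡ h n' [ZMOD d ^ m] := by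
  have hd : (d : ℤ) ≠ 0 := Nat.cast_ne_zero.mpr (NeZero.ne d)
  have key (hnn' : n ≡ n' [ZMOD d]) :
      n ≡ n' [ZMOD d ^ (m + 1)] ↔ h n ≡ h n' [ZMOD d ^ m] := by
    simp only [Int.modEq_iff_dvd]
    calc (d : ℤ) ^ (m + 1) ∣ n' - n
        ↔ (d : ℤ) ^ (m + 1) ∣ l * (n' - n) :=
          ⟨(Dvd.dvd.mul_left · l), (hl.symm.pow_left).dvd_of_dvd_mul_left⟩
      _ ↔ (d : ℤ) ^ m ∣ h n' - h n := by
          rw [← mul_sub_eq_of_modEq hh hnn', pow_succ', mul_dvd_mul_iff_left hd]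
  refine ⟨fun H => ?_, fun ⟨H₁, H₂⟩ => (key H₁).mpr H₂⟩
  have H₁ : n ≡ n' [ZMOD d] := Int.ModEq.of_mul_right _ (by rwa [pow_succ'] at H)
  exact ⟨H₁, (key H₁).mp H⟩

theorem exists_finset_mem_iff_mod_mem_and_map_mem [NeZero d] (hl : IsCoprime l (d : ℤ))
    (hh : ∀ n : ℤ, (d : ℤ) * h n = l * n + L (n % d)) {m : ℕ}
    (B : Finset (ZMod d)) (A : Finset (ZMod (d ^ m))) :
    ∃ S : Finset (ZMod (d ^ (m + 1))), S.card = B.card * A.card ∧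
      ∀ n : ℤ, (n : ZMod (d ^ (m + 1))) ∈ S ↔
        (n : ZMod d) ∈ B ∧ (h n : ZMod (d ^ m)) ∈ A := by
  obtain ⟨e, he⟩ :=
    ZMod.exists_equiv_of_fibers_eq (c := d ^ (m + 1)) (X := ZMod d × ZMod (d ^ m))
    (by rw [Fintype.card_prod, ZMod.card, ZMod.card, pow_succ']) (fun n => (n, h n))
    fun n n' => by
      simp only [Prod.mk.injEq, ZMod.intCast_eq_intCast_iff, Nat.cast_pow]
      exact (modEq_pow_succ_iff hl hh m n n').symm
  refine ⟨(B ×ˢ A).map e.symm.toEmbedding, by rw [Finset.card_map, Finset.card_product], ?_⟩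
  intro n
  rw [Finset.mem_map_equiv, Equiv.symm_symm, he, Finset.mem_product]

def Survives (d : ℕ) (h : ℤ → ℤ) (m : ℕ) (n : ℤ) : Prop :=
  ∀ j < m, ¬ (d : ℤ) ∣ h^[j] n

theorem survives_succ_iff {m : ℕ} {n : ℤ} :
    Survives d h (m + 1) n ↔ ¬ (d : ℤ) ∣ n ∧ Survives d h m (h n) := by
  simp only [Survives, Nat.forall_lt_succ_left, Function.iterate_zero_apply,
    Function.iterate_succ_apply]

theorem survives_map_iff {m : ℕ} {n : ℤ} :
    Survives d h m (h n) ↔ ∀ j : ℕ, 1 ≤ j → j ≤ m → ¬ (d : ℤ) ∣ h^[j] n := by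
  refine ⟨fun H j hj₁ hj₂ => ?_, fun H j hj => ?_⟩
  · obtain ⟨i, rfl⟩ := Nat.exists_eq_add_of_le' hj₁
    simpa only [Function.iterate_succ_apply] using H i hj₂
  · simpa only [Function.iterate_succ_apply] using H (j + 1) (by omega) hj

theorem exists_finset_survives_iff [NeZero d] (hl : IsCoprime l (d : ℤ))
    (hh : ∀ n : ℤ, (d : ℤ) * h n = l * n + L (n % d)) (m : ℕ) :
    ∃ A : Finset (ZMod (d ^ m)), A.card = (d - 1) ^ m ∧
      ∀ n : ℤ, Survives d h m n ↔ (n : ZMod (d ^ m)) ∈ A := by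
  induction m with
  | zero =>
    refine ⟨Finset.univ, by rw [Finset.card_univ, ZMod.card, pow_zero, pow_zero], fun n => ?_⟩
    exact iff_of_true (fun _ hj => absurd hj (Nat.not_lt_zero _)) (Finset.mem_univ _)
  | succ m ih =>
    obtain ⟨A, hA, hmem⟩ := ih
    obtain ⟨S, hS, hSmem⟩ :=
      exists_finset_mem_iff_mod_mem_and_map_mem hl hh (Finset.univ.erase 0) A
    refine ⟨S, by rw [hS, hA, Finset.card_erase_of_mem (Finset.mem_univ _), Finset.card_univ,
      ZMod.card, pow_succ'], fun n => ?_⟩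
    rw [survives_succ_iff, hSmem, hmem, Finset.mem_erase, Ne, ZMod.intCast_zmod_eq_zero_iff_dvd]
    simp only [Finset.mem_univ, and_true]

end PeriodicallyLinear

theorem periodically_linear_survivors_residue_classes_general
    (d : ℕ) (hd : 2 ≤ d) (l : ℤ) (hl : IsCoprime l (d : ℤ))
    (L : ℤ → ℤ)
    (h : ℤ → ℤ) (hh : ∀ n : ℤ, (d : ℤ) * h n = l * n + L (n % d))
    (k : ℕ) :
    ∃ S : Finset (ZMod (d ^ (k + 1))), S.card = d * (d - 1) ^ k ∧
      ∀ n : ℤ, ((∀ j : ℕ, 1 ≤ j → j ≤ k → ¬ (d : ℤ) ∣ h^[j] n)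
        ↔ (n : ZMod (d ^ (k + 1))) ∈ S) := by
  have : NeZero d := ⟨by omega⟩
  obtain ⟨A, hA, hmem⟩ := PeriodicallyLinear.exists_finset_survives_iff hl hh k
  obtain ⟨S, hS, hSmem⟩ :=
    PeriodicallyLinear.exists_finset_mem_iff_mod_mem_and_map_mem hl hh Finset.univ A
  refine ⟨S, by rw [hS, hA, Finset.card_univ, ZMod.card], fun n => ?_⟩
  rw [← PeriodicallyLinear.survives_map_iff, hSmem, hmem, and_iff_right (Finset.mem_univ _)]

/-- Theorem 5.2 part (1)-type statement: let `d ≥ 2`, `gcd(l,d) = 1`, and let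
`h : ℤ → ℤ` satisfy `d * h n = l * n + L (n % d)` where `L b ≡ -l*b (mod d)` for
`0 ≤ b < d`. Then for each `k ≥ 1`, the set of integers `n` with
`h^(j)(n) ≢ 0 (mod d)` for all `1 ≤ j ≤ k` is a union of exactly `d (d-1)^k`
residue classes modulo `d^(k+1)`. -/
theorem periodically_linear_survivors_residue_classes
    (d : ℕ) (hd : 2 ≤ d) (l : ℤ) (hl : IsCoprime l (d : ℤ))
    (L : ℤ → ℤ) (hL : ∀ b : ℤ, 0 ≤ b → b < d → (d : ℤ) ∣ L b + l * b)
    (h : ℤ → ℤ) (hh : ∀ n : ℤ, (d : ℤ) * h n = l * n + L (n % d))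
    (k : ℕ) (hk : 1 ≤ k) :
    ∃ S : Finset (ZMod (d ^ (k + 1))), S.card = d * (d - 1) ^ k ∧
      ∀ n : ℤ, ((∀ j : ℕ, 1 ≤ j → j ≤ k → ¬ (d : ℤ) ∣ h^[j] n)
        ↔ (n : ZMod (d ^ (k + 1))) ∈ S) :=
  periodically_linear_survivors_residue_classes_general d hd l hl L h hh k
end

section
/- Let d ≥ 2, gcd(l,d) = 1, and let h : ℤ → ℤ with h(n) = (l·n + l_b)/d for n ≡ b (mod d), l_b ≡ -l·b (mod d). Define N*(x) = #{n ∈ ℤ : |n| ≤ x, h^(k)(n) ≢ 0 (mod d) for all 1 ≤ k ≤ log_d x}. Then N*(x) ≤ 4d·x^{β_d} for all x ≥ 1, where β_d = log(d-1)/log d. -/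
/-!
Since `d * h n = l * n + L (n % d)`, two integers congruent modulo `d ^ (k + 1)` have images
congruent modulo `d ^ k`, and conversely (as `l` is a unit modulo `d`) the residue of `r` modulo
`d ^ (k + 1)` is determined by `r % d` and `h r % d ^ k`. Hence among the residues modulo
`d ^ (k + 1)`, those whose first `k` iterates avoid `0 mod d` number at most `d (d - 1) ^ k`.
With `K = ⌊log_d x⌋`, every `|n| ≤ x` lies in one of the two windows `[0, d ^ (K + 1))` and
`[-d ^ (K + 1), 0)`, so `N*(x) ≤ 2 d (d - 1) ^ K ≤ 2 d x ^ β_d`, as `(d - 1) ^ K = (d ^ K) ^ β_d`.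
-/

open Finset Real

section PeriodicallyLinear

variable {d : ℕ} {l : ℤ} {L h : ℤ → ℤ}

theorem mul_sub_eq_of_emod_eq (hh : ∀ n : ℤ, (d : ℤ) * h n = l * n + L (n % d)) {m n : ℤ}
    (hmn : m % d = n % d) : (d : ℤ) * (h m - h n) = l * (m - n) := by
  have hm := hh m
  rw [hmn] at hm
  linear_combination hm - hh n

theorem pow_dvd_sub_of_pow_succ_dvd_sub (hd : d ≠ 0)
    (hh : ∀ n : ℤ, (d : ℤ) * h n = l * n + L (n % d)) {k : ℕ} {m n : ℤ}
    (hmn : (d : ℤ) ^ (k + 1) ∣ m - n) : (d : ℤ) ^ k ∣ h m - h n := by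
  have hmod : m ≡ n [ZMOD d] :=
    (Int.modEq_iff_dvd.2 ((dvd_pow_self _ k.succ_ne_zero).trans hmn)).symm
  rw [← mul_dvd_mul_iff_left (Int.natCast_ne_zero.2 hd), ← pow_succ',
    mul_sub_eq_of_emod_eq hh hmod]
  exact hmn.mul_left l

theorem pow_dvd_sub_iterate (hd : d ≠ 0) (hh : ∀ n : ℤ, (d : ℤ) * h n = l * n + L (n % d))
    (j : ℕ) {k : ℕ} {m n : ℤ} (hmn : (d : ℤ) ^ (j + k) ∣ m - n) :
    (d : ℤ) ^ k ∣ h^[j] m - h^[j] n := by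
  induction j generalizing m n with
  | zero => simpa using hmn
  | succ j ih =>
    refine ih (pow_dvd_sub_of_pow_succ_dvd_sub hd hh ?_)
    rwa [add_right_comm] at hmn

theorem pow_succ_dvd_sub_of_pow_dvd_sub (hl : IsCoprime l d)
    (hh : ∀ n : ℤ, (d : ℤ) * h n = l * n + L (n % d)) {k : ℕ} {m n : ℤ}
    (hmn : m % d = n % d) (hk : (d : ℤ) ^ k ∣ h m - h n) : (d : ℤ) ^ (k + 1) ∣ m - n := by
  refine hl.symm.pow_left.dvd_of_dvd_mul_left ?_
  rw [← mul_sub_eq_of_emod_eq hh hmn, pow_succ']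
  exact mul_dvd_mul_left _ hk

theorem card_filter_Ico_pow_succ_le (hd : d ≠ 0) (hl : IsCoprime l d)
    (hh : ∀ n : ℤ, (d : ℤ) * h n = l * n + L (n % d)) (k : ℕ) (q p : ℤ → Prop)
    [DecidablePred q] [DecidablePred p] (hp : ∀ m n, (d : ℤ) ^ k ∣ m - n → p m → p n) :
    #{r ∈ Ico 0 ((d : ℤ) ^ (k + 1)) | q (r % d) ∧ p (h r)}
      ≤ #{b ∈ Ico 0 (d : ℤ) | q b} * #{s ∈ Ico 0 ((d : ℤ) ^ k) | p s} := by
  have hd0 : (0 : ℤ) < d := by positivity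
  have hdk : (0 : ℤ) < (d : ℤ) ^ k := by positivity
  rw [← card_product]
  refine card_le_card_of_injOn (fun r => (r % d, h r % (d : ℤ) ^ k)) ?_ ?_
  · intro r hr
    simp only [coe_filter, mem_Ico, Set.mem_ofPred_eq] at hr
    simp only [coe_product, coe_filter, Set.mem_prod, Set.mem_ofPred_eq, mem_Ico]
    refine ⟨⟨⟨Int.emod_nonneg _ hd0.ne', Int.emod_lt_of_pos _ hd0⟩, hr.2.1⟩,
      ⟨Int.emod_nonneg _ hdk.ne', Int.emod_lt_of_pos _ hdk⟩, ?_⟩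
    exact hp _ _ (Int.mod_modEq _ _).dvd hr.2.2
  · intro r hr s hs hrs
    simp only [coe_filter, mem_Ico, Set.mem_ofPred_eq] at hr hs
    simp only [Prod.mk.injEq] at hrs
    have hdvd := pow_succ_dvd_sub_of_pow_dvd_sub hl hh hrs.1 (Int.ModEq.dvd hrs.2.symm)
    have := Int.eq_zero_of_abs_lt_dvd hdvd (abs_sub_lt_iff.2 ⟨by omega, by omega⟩)
    omega

def OrbitAvoidsMultiples (d : ℕ) (h : ℤ → ℤ) (k : ℕ) (n : ℤ) : Prop :=
  ∀ j < k, ¬ (d : ℤ) ∣ h^[j] n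

instance (k : ℕ) : DecidablePred (OrbitAvoidsMultiples d h k) :=
  fun _ => inferInstanceAs (Decidable (∀ j < k, _))

theorem orbitAvoidsMultiples_succ_iff {k : ℕ} {n : ℤ} :
    OrbitAvoidsMultiples d h (k + 1) n ↔ n % d ≠ 0 ∧ OrbitAvoidsMultiples d h k (h n) := by
  simp only [OrbitAvoidsMultiples, Nat.forall_lt_succ_left, Function.iterate_succ_apply,
    Function.iterate_zero_apply, Int.dvd_iff_emod_eq_zero]

theorem OrbitAvoidsMultiples.of_pow_dvd_sub (hd : d ≠ 0)
    (hh : ∀ n : ℤ, (d : ℤ) * h n = l * n + L (n % d)) {k : ℕ} {m n : ℤ}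
    (hmn : (d : ℤ) ^ k ∣ m - n) (hm : OrbitAvoidsMultiples d h k m) :
    OrbitAvoidsMultiples d h k n := by
  intro j hj
  have hj' : (d : ℤ) ^ 1 ∣ h^[j] m - h^[j] n :=
    pow_dvd_sub_iterate hd hh j ((pow_dvd_pow _ hj).trans hmn)
  rw [← Int.dvd_iff_dvd_of_dvd_sub (pow_one (d : ℤ) ▸ hj')]
  exact hm j hj

theorem card_filter_orbitAvoidsMultiples_le (hd : d ≠ 0) (hl : IsCoprime l d)
    (hh : ∀ n : ℤ, (d : ℤ) * h n = l * n + L (n % d)) (k : ℕ) :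
    #{r ∈ Ico 0 ((d : ℤ) ^ k) | OrbitAvoidsMultiples d h k r} ≤ (d - 1) ^ k := by
  induction k with
  | zero => exact (card_filter_le _ _).trans (by simp)
  | succ k ih =>
    simp only [orbitAvoidsMultiples_succ_iff]
    refine (card_filter_Ico_pow_succ_le hd hl hh k (· ≠ 0) (OrbitAvoidsMultiples d h k)
      fun _ _ hmn hm => hm.of_pow_dvd_sub hd hh hmn).trans ?_
    rw [pow_succ']
    refine Nat.mul_le_mul (le_of_eq ?_) ih
    rw [filter_ne', card_erase_of_mem (by simpa using Nat.pos_of_ne_zero hd), Int.card_Ico]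
    omega

theorem card_filter_orbitAvoidsMultiples_comp_le (hd : d ≠ 0) (hl : IsCoprime l d)
    (hh : ∀ n : ℤ, (d : ℤ) * h n = l * n + L (n % d)) (k : ℕ) :
    #{r ∈ Ico 0 ((d : ℤ) ^ (k + 1)) | OrbitAvoidsMultiples d h k (h r)} ≤ d * (d - 1) ^ k := by
  have := card_filter_Ico_pow_succ_le hd hl hh k (fun _ => True) (OrbitAvoidsMultiples d h k)
    fun _ _ hmn hm => hm.of_pow_dvd_sub hd hh hmn
  simpa [Int.card_Ico] using this.trans (Nat.mul_le_mul_left _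
    (card_filter_orbitAvoidsMultiples_le hd hl hh k))

theorem periodic_orbitAvoidsMultiples_comp (hd : d ≠ 0)
    (hh : ∀ n : ℤ, (d : ℤ) * h n = l * n + L (n % d)) (k : ℕ) :
    Function.Periodic (fun n => OrbitAvoidsMultiples d h k (h n)) ((d : ℤ) ^ (k + 1)) := by
  have hstep {m n : ℤ} (hmn : (d : ℤ) ^ (k + 1) ∣ m - n)
      (hm : OrbitAvoidsMultiples d h k (h m)) : OrbitAvoidsMultiples d h k (h n) :=
    hm.of_pow_dvd_sub hd hh (pow_dvd_sub_of_pow_succ_dvd_sub hd hh hmn)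
  exact fun n => propext ⟨hstep (by simp), hstep (by simp)⟩

end PeriodicallyLinear

theorem ncard_le_two_mul_card_filter_Ico {M : ℤ} {P : ℤ → Prop} [DecidablePred P]
    (hP : Function.Periodic P M) {S : Set ℤ} (hS : ∀ n ∈ S, |n| < M ∧ P n) :
    S.ncard ≤ 2 * #{r ∈ Ico 0 M | P r} := by
  set A := {r ∈ Ico 0 M | P r}
  have hsub : S ⊆ ↑(A ∪ A.image (· - M)) := by
    intro n hn
    obtain ⟨hnM, hPn⟩ := hS n hn
    rw [abs_lt] at hnM
    simp only [A, coe_union, coe_image, coe_filter, mem_Ico, Set.mem_union, Set.mem_ofPred_eq,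
      Set.mem_image]
    rcases le_or_gt 0 n with h0 | h0
    · exact Or.inl ⟨⟨h0, hnM.2⟩, hPn⟩
    · exact Or.inr ⟨n + M, ⟨⟨by omega, by omega⟩, by rwa [hP n]⟩, by ring⟩
  calc S.ncard ≤ #(A ∪ A.image (· - M)) := by
        rw [← Set.ncard_coe_finset]; exact Set.ncard_le_ncard hsub (Finset.finite_toSet _)
    _ ≤ #A + #A := (card_union_le _ _).trans (Nat.add_le_add_left card_image_le _)
    _ = 2 * #A := (two_mul _).symm

theorem pow_floor_logb_le {b x : ℝ} (hb : 1 < b) (hx : 1 ≤ x) : b ^ ⌊logb b x⌋₊ ≤ x := by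
  rw [← rpow_natCast, ← le_logb_iff_rpow_le hb (by linarith)]
  exact Nat.floor_le (logb_nonneg hb hx)

theorem lt_pow_floor_logb_add_one {b x : ℝ} (hb : 1 < b) (hx : 0 < x) :
    x < b ^ (⌊logb b x⌋₊ + 1) := by
  rw [← rpow_natCast, ← logb_lt_iff_lt_rpow hb hx, Nat.cast_add_one]
  exact Nat.lt_floor_add_one _

theorem pow_le_rpow_logb_of_pow_le {b c x : ℝ} {k : ℕ} (hb : 1 < b) (hc : 1 ≤ c)
    (hbx : b ^ k ≤ x) : c ^ k ≤ x ^ logb b c := by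
  calc c ^ k = (b ^ logb b c) ^ k := by rw [rpow_logb (by linarith) hb.ne' (by linarith)]
    _ = (b ^ k) ^ logb b c := rpow_pow_comm (by linarith) _ _
    _ ≤ x ^ logb b c := rpow_le_rpow (by positivity) hbx (logb_nonneg hb hc)

theorem periodically_linear_exceptional_bound_general
    (d : ℕ) (hd : 2 ≤ d) (l : ℤ) (hl : IsCoprime l (d : ℤ))
    (L : ℤ → ℤ)
    (h : ℤ → ℤ) (hh : ∀ n : ℤ, (d : ℤ) * h n = l * n + L (n % d))
    (x : ℝ) (hx : 1 ≤ x) :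
    (Set.ncard {n : ℤ | |(n : ℝ)| ≤ x ∧
        ∀ k : ℕ, 1 ≤ k → (k : ℝ) ≤ Real.log x / Real.log d → ¬ (d : ℤ) ∣ h^[k] n} : ℝ)
      ≤ 4 * d * x ^ (Real.log ((d : ℝ) - 1) / Real.log d) := by
  have hd0 : d ≠ 0 := by omega
  have hd2 : (2 : ℝ) ≤ d := by exact_mod_cast hd
  have hdR : (1 : ℝ) < d := by linarith
  simp only [log_div_log]
  set K := ⌊logb d x⌋₊
  have hS : ∀ n ∈ {n : ℤ | |(n : ℝ)| ≤ x ∧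
      ∀ k : ℕ, 1 ≤ k → (k : ℝ) ≤ logb d x → ¬ (d : ℤ) ∣ h^[k] n},
      |n| < (d : ℤ) ^ (K + 1) ∧ OrbitAvoidsMultiples d h K (h n) := by
    rintro n ⟨hnx, hn⟩
    refine ⟨?_, fun j hj => ?_⟩
    · have hnM := hnx.trans_lt (lt_pow_floor_logb_add_one hdR (by linarith))
      exact_mod_cast hnM
    · rw [← Function.iterate_succ_apply]
      exact hn (j + 1) j.succ_pos
        ((Nat.cast_le.2 hj).trans (Nat.floor_le (logb_nonneg hdR hx)))
  have hcount := (ncard_le_two_mul_card_filter_Ico (periodic_orbitAvoidsMultiples_comp hd0 hh K)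
    hS).trans (Nat.mul_le_mul_left 2 (card_filter_orbitAvoidsMultiples_comp_le hd0 hl hh K))
  calc _ ≤ 2 * d * ((d : ℝ) - 1) ^ K := by
        have hcast : (((2 * (d * (d - 1) ^ K)) : ℕ) : ℝ) = 2 * d * ((d : ℝ) - 1) ^ K := by
          push_cast [Nat.cast_sub (by omega : 1 ≤ d)]
          ring
        exact hcast ▸ Nat.cast_le.2 hcount
    _ ≤ 2 * d * x ^ logb d (d - 1) := by
        gcongr
        exact pow_le_rpow_logb_of_pow_le hdR (by linarith) (pow_floor_logb_le hdR hx)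
    _ ≤ 4 * d * x ^ logb d (d - 1) := by gcongr; norm_num

/-- Theorem 5.2 part (2): with `h` periodically linear of the form
`h n = (l n + l_b)/d` for `n ≡ b (mod d)`, `gcd(l,d)=1`, the number `N*(x)` of
integers `|n| ≤ x` such that `h^(k)(n) ≢ 0 (mod d)` for all `1 ≤ k ≤ log_d x`
satisfies `N*(x) ≤ 4 d x^(β_d)` for all `x ≥ 1`, where `β_d = log(d-1)/log d`. -/
theorem periodically_linear_exceptional_bound
    (d : ℕ) (hd : 2 ≤ d) (l : ℤ) (hl : IsCoprime l (d : ℤ))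
    (L : ℤ → ℤ) (hL : ∀ b : ℤ, 0 ≤ b → b < d → (d : ℤ) ∣ L b + l * b)
    (h : ℤ → ℤ) (hh : ∀ n : ℤ, (d : ℤ) * h n = l * n + L (n % d))
    (x : ℝ) (hx : 1 ≤ x) :
    (Set.ncard {n : ℤ | |(n : ℝ)| ≤ x ∧
        ∀ k : ℕ, 1 ≤ k → (k : ℝ) ≤ Real.log x / Real.log d → ¬ (d : ℤ) ∣ h^[k] n} : ℝ)
      ≤ 4 * d * x ^ (Real.log ((d : ℝ) - 1) / Real.log d) :=
  periodically_linear_exceptional_bound_general d hd l hl L h hh x hx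
end

section
/- Let r = (2t+1)/2 for some integer t, and let h : ℤ → ℤ be defined by h(n) = r·n + l_0 if n even, h(n) = r·n + 1/2 + l_1 if n odd, for some integers l_0, l_1. Then for every integer n, with at most two exceptions, there exists k ≥ 1 with h^(k)(n) ≡ 0 (mod 2). -/
/-- Theorem 5.1: let `r = (2t+1)/2` and `h : ℤ → ℤ` be given by
`h n = r n + l₀` for `n` even and `h n = r n + 1/2 + l₁` for `n` odd
(i.e. `2 h n = (2t+1) n + 2 l₀` for even `n` and `2 h n = (2t+1) n + 1 + 2 l₁`
for odd `n`). Then for every integer `n`, with at most two exceptions, some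
iterate `h^(k)(n)`, `k ≥ 1`, is even. -/
theorem periodically_linear_den_two_reaches_even
    (t l₀ l₁ : ℤ) (h : ℤ → ℤ)
    (heven : ∀ n : ℤ, Even n → 2 * h n = (2 * t + 1) * n + 2 * l₀)
    (hodd : ∀ n : ℤ, Odd n → 2 * h n = (2 * t + 1) * n + 1 + 2 * l₁) :
    ∃ E : Finset ℤ, E.card ≤ 2 ∧
      ∀ n : ℤ, n ∉ E → ∃ k : ℕ, 1 ≤ k ∧ (2 : ℤ) ∣ h^[k] n := by
  set d : ℤ := 2 * t + 1 with hd
  set D : ℤ := (2 - d) * d with hD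
  have hdodd : Odd d := ⟨t, by ring⟩
  have hDne : D ≠ 0 := by
    have h1 : (2 - d) ≠ 0 := by omega
    have h2 : d ≠ 0 := by omega
    exact mul_ne_zero h1 h2
  set q₀ : ℤ := 2 + 4*l₁ - 2*l₀*(2-d) with hq₀
  set q₁ : ℤ := 2 + 4*l₁ - (1+2*l₁)*(2-d) with hq₁
  refine ⟨{q₀ / D, q₁ / D}, ?_, ?_⟩
  · exact (Finset.card_insert_le _ _).trans (by simp)
  · intro n hn
    simp only [Finset.mem_insert, Finset.mem_singleton, not_or] at hn
    by_contra hcon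
    push_neg at hcon
    have hallodd : ∀ k : ℕ, 1 ≤ k → Odd (h^[k] n) := by
      intro k hk
      rcases Int.even_or_odd (h^[k] n) with he | ho
      · exact absurd he.two_dvd (hcon k hk)
      · exact ho
    set A : ℤ → ℤ := fun m => (2 - d) * m - (1 + 2*l₁) with hA
    have step : ∀ m, Odd m → 2 * A (h m) = d * A m := by
      intro m hm
      have h2 := hodd m hm
      simp only [hA]
      linear_combination (2 - d) * h2
    have iter : ∀ k : ℕ, 2^k * A (h^[k] (h n)) = d^k * A (h n) := by
      intro k
      induction k with
      | zero => simp
      | succ k ih =>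
        have ho : Odd (h^[k] (h n)) := by
          have := hallodd (k+1) (by omega)
          rwa [Function.iterate_succ_apply] at this
        rw [Function.iterate_succ_apply', pow_succ, pow_succ]
        calc 2^k * 2 * A (h (h^[k] (h n))) = 2^k * (2 * A (h (h^[k] (h n)))) := by ring
        _ = 2^k * (d * A (h^[k] (h n))) := by rw [step _ ho]
        _ = d * (2^k * A (h^[k] (h n))) := by ring
        _ = d * (d^k * A (h n)) := by rw [ih]
        _ = d^k * d * A (h n) := by ring
    have hAzero : A (h n) = 0 := by
      by_contra hne
      obtain ⟨k, hk⟩ := pow_unbounded_of_one_lt (|A (h n)|) (by norm_num : (1:ℤ) < 2)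
      have hcop : IsCoprime (2:ℤ) d :=
        (Int.prime_two.coprime_iff_not_dvd).2 (by rcases hdodd with ⟨c, hc⟩; omega)
      have hdvd : (2:ℤ)^k ∣ A (h n) := by
        have h1 : (2:ℤ)^k ∣ d^k * A (h n) := ⟨A (h^[k] (h n)), (iter k).symm⟩
        exact (hcop.pow).dvd_of_dvd_mul_left h1
      have hle : (2:ℤ)^k ≤ |A (h n)| :=
        Int.le_of_dvd (abs_pos.2 hne) ((dvd_abs _ _).2 hdvd)
      exact absurd hk (not_lt.2 hle)
    have hAeq : (2 - d) * (2 * h n) = 2 + 4*l₁ := by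
      have : (2 - d) * h n = 1 + 2*l₁ := by
        have := hAzero
        simp only [hA] at this
        linarith
      linarith [this]
    rcases Int.even_or_odd n with he | ho
    · have h2 := heven n he
      have hDn : D * n = q₀ := by
        rw [h2] at hAeq
        simp only [hD, hq₀]
        nlinarith [hAeq]
      have : q₀ / D = n := by rw [← hDn, Int.mul_ediv_cancel_left _ hDne]
      exact hn.1 this.symm
    · have h2 := hodd n ho
      have hDn : D * n = q₁ := by
        rw [h2] at hAeq
        simp only [hD, hq₁]
        nlinarith [hAeq]
      have : q₁ / D = n := by rw [← hDn, Int.mul_ediv_cancel_left _ hDne]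
      exact hn.2 this.symm
end

section
/- Define g(n) = ⌈(3/2)n⌉ on ℤ, i.e., g(n) = 3n/2 if n is even and g(n) = (3n+1)/2 if n is odd. Then for every integer n with n ≠ -1, there exists j ≥ 1 such that g^(j)(n) is even. -/
/-!
For odd `n`, `g n + 1 = 3 (n + 1) / 2`, so each step from an odd number removes one factor `2`
from `n + 1`. Since `n + 1 ≠ 0` has only finitely many factors `2`, the orbit reaches an even
number. Starting from `g n` instead gives `j ≥ 1`, because `g n = -1` only for `n = -1`.
-/

def mahlerMap (m : ℤ) : ℤ := ⌈(3 * m : ℚ) / 2⌉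

lemma mahlerMap_eq (m : ℤ) : mahlerMap m = -(-(3 * m) / 2) := by
  simpa [mahlerMap] using Rat.ceil_intCast_div_natCast (3 * m) 2

lemma mahlerMap_eq_neg_one_iff {m : ℤ} : mahlerMap m = -1 ↔ m = -1 := by
  rw [mahlerMap_eq]; omega

lemma two_mul_mahlerMap_add_one_of_odd {m : ℤ} (hm : Odd m) :
    2 * (mahlerMap m + 1) = 3 * (m + 1) := by
  obtain ⟨t, rfl⟩ := hm
  rw [mahlerMap_eq]; omega

lemma pow_succ_dvd_add_one_of_odd {m : ℤ} {k : ℕ} (hm : Odd m)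
    (h : 2 ^ k ∣ mahlerMap m + 1) : 2 ^ (k + 1) ∣ m + 1 := by
  have h3 : 2 ^ (k + 1) ∣ 3 * (m + 1) := by
    rw [← two_mul_mahlerMap_add_one_of_odd hm, pow_succ']
    exact mul_dvd_mul_left 2 h
  exact (IsCoprime.pow_left (⟨-1, 1, by norm_num⟩ : IsCoprime (2 : ℤ) 3)).dvd_of_dvd_mul_left h3

lemma exists_even_iterate_of_not_pow_dvd (k : ℕ) :
    ∀ m : ℤ, ¬ 2 ^ k ∣ m + 1 → ∃ j : ℕ, Even (mahlerMap^[j] m) := by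
  induction k with
  | zero => simp
  | succ k ih =>
    intro m hk
    by_cases hm : Even m
    · exact ⟨0, hm⟩
    · obtain ⟨j, hj⟩ := ih (mahlerMap m) fun h ↦
        hk (pow_succ_dvd_add_one_of_odd (Int.not_even_iff_odd.mp hm) h)
      exact ⟨j + 1, hj⟩

lemma exists_even_iterate {m : ℤ} (hm : m ≠ -1) : ∃ j : ℕ, Even (mahlerMap^[j] m) := by
  obtain ⟨k, hk⟩ : FiniteMultiplicity (2 : ℤ) (m + 1) :=
    Int.finiteMultiplicity_iff.mpr ⟨by decide, by omega⟩
  exact exists_even_iterate_of_not_pow_dvd (k + 1) m hk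

/-- For `g n = ⌈(3/2) n⌉` on `ℤ`: every integer `n ≠ -1` has some iterate
`g^(j)(n)`, `j ≥ 1`, that is even. -/
theorem mahler_map_reaches_even (n : ℤ) (hn : n ≠ -1) :
    ∃ j : ℕ, 1 ≤ j ∧ Even ((fun m : ℤ => ⌈(3 * m : ℚ) / 2⌉)^[j] n) := by
  obtain ⟨j, hj⟩ := exists_even_iterate (mt mahlerMap_eq_neg_one_iff.mp hn)
  exact ⟨j + 1, by omega, hj⟩
end
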